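/- Let (a_n) be lacunary with constant c > 1, r ≥ 2 an integer, C ≥ 1, z_1 > z_2 > ... > z_r ≥ 1 integers, and b ∈ ℝ. For any M ≥ 1 and d ∈ ℤ, the number of integer vectors y = (y_1,...,y_r) with |y_i| ≤ M for all i, satisfying |y_1 a_{z_1} + ... + y_r a_{z_r} + b| ≤ C·a_{z_1} and y_1 + ... + y_r = d, is at most K·C·M^{r-2} for a constant K depending only on r and c. -/
import Mathlib

open Finset

lemma sum_split3 {r : ℕ} {α : Type*} [AddCommMonoid α] (o l : Fin r) (h : o ≠ l)
    (f : Fin r → α) :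
    ∑ i, f i = f o + f l + ∑ i ∈ Finset.univ \ {o, l}, f i := by
  rw [← Finset.sum_sdiff (Finset.subset_univ {o, l}), Finset.sum_pair h, add_comm]

theorem stmt3 (c : ℝ) (hc : 1 < c) (r : ℕ) (hr : 2 ≤ r) :
    ∃ K : ℝ, 0 < K ∧ ∀ a : ℕ → ℝ, 0 < a 1 → (∀ n ≥ 1, 0 < a n) →
      (∀ n ≥ 1, c * a n ≤ a (n + 1)) →
      ∀ C : ℝ, 1 ≤ C → ∀ z : Fin r → ℕ, (∀ i, 1 ≤ z i) →
      (∀ i j : Fin r, i < j → z j < z i) → ∀ b M : ℝ, 1 ≤ M → ∀ d : ℤ,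
      ({y : Fin r → ℤ | (∀ i, |(y i : ℝ)| ≤ M) ∧
          |∑ i, (y i : ℝ) * a (z i) + b| ≤ C * a (z ⟨0, by omega⟩) ∧
          ∑ i, y i = d}.ncard : ℝ) ≤
        K * C * M ^ (r - 2) := by
  have hc1 : (0:ℝ) < c - 1 := by linarith
  refine ⟨3 ^ (r - 2) * (2 * c / (c - 1) + 2), by positivity, ?_⟩
  intro a ha1 hapos hgrow C hC z hz1 hzmono b M hM d
  set o : Fin r := ⟨0, by omega⟩ with ho
  set l : Fin r := ⟨r - 1, by omega⟩ with hl
  have hol : o ≠ l := by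
    simp only [ho, hl, ne_eq, Fin.mk.injEq]
    omega
  -- monotonicity of a
  have mono : ∀ m, 1 ≤ m → ∀ n, m ≤ n → a m ≤ a n := by
    intro m hm n hn
    induction n, hn using Nat.le_induction with
    | base => exact le_refl _
    | succ k hk ih =>
      have h1k : 1 ≤ k := le_trans hm hk
      calc a m ≤ a k := ih
        _ ≤ c * a k := by nlinarith [hapos k h1k]
        _ ≤ a (k + 1) := hgrow k h1k
  have hzol : z l < z o := hzmono o l (by simp only [ho, hl, Fin.lt_def]; omega)
  have hzl1 : 1 ≤ z l := hz1 l
  have hkey : c * a (z l) ≤ a (z o) :=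
    le_trans (hgrow (z l) hzl1) (mono (z l + 1) (by omega) (z o) (by omega))
  have ha1pos : 0 < a (z o) := hapos _ (hz1 o)
  have harpos : 0 < a (z l) := hapos _ hzl1
  set D : ℝ := a (z o) - a (z l) with hD
  have hDpos : 0 < D := by rw [hD]; nlinarith
  have hDge : a (z o) * (c - 1) ≤ D * c := by rw [hD]; nlinarith
  set g : Fin r → ℝ := fun i => a (z i) - a (z l) with hg
  set T : (Fin r → ℤ) → ℝ := fun w => ∑ i, (w i : ℝ) * g i with hT
  set t : (Fin r → ℤ) → ℝ :=
    fun w => (-(C * a (z o)) - b - (d : ℝ) * a (z l) - T w) / D with ht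
  set wmap : (Fin r → ℤ) → (Fin r → ℤ) :=
    fun y i => if i = o ∨ i = l then 0 else y i with hwmap
  set φ : (Fin r → ℤ) → (Fin r → ℤ) × ℤ :=
    fun y => (wmap y, y o - ⌈t (wmap y)⌉) with hφ
  set S : Set (Fin r → ℤ) := {y : Fin r → ℤ | (∀ i, |(y i : ℝ)| ≤ M) ∧
      |∑ i, (y i : ℝ) * a (z i) + b| ≤ C * a (z o) ∧
      ∑ i, y i = d} with hS
  show (S.ncard : ℝ) ≤ _
  -- decomposition
  have decomp : ∀ y : Fin r → ℤ, (∑ i, y i = d) →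
      ∑ i, (y i : ℝ) * a (z i) + b
        = (y o : ℝ) * D + T (wmap y) + (d : ℝ) * a (z l) + b := by
    intro y hsum
    have hdc : ((d : ℤ) : ℝ) = ∑ i, (y i : ℝ) := by
      rw [← hsum]; push_cast; ring
    have h1 : ∑ i, (y i : ℝ) * a (z i) = ∑ i, (y i : ℝ) * g i + (d : ℝ) * a (z l) := by
      have e : ∑ i, (y i : ℝ) * a (z i)
          = ∑ i, ((y i : ℝ) * g i + (y i : ℝ) * a (z l)) :=
        Finset.sum_congr rfl (fun i _ => by simp only [hg]; ring)
      rw [e, Finset.sum_add_distrib, ← Finset.sum_mul, ← hdc]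
    have h2 : ∑ i, (y i : ℝ) * g i = (y o : ℝ) * D + T (wmap y) := by
      have eT : T (wmap y) = ∑ i, ((wmap y i : ℤ) : ℝ) * g i := rfl
      rw [sum_split3 o l hol (fun i => (y i : ℝ) * g i), eT,
        sum_split3 o l hol (fun i => ((wmap y i : ℤ) : ℝ) * g i)]
      have e1 : g o = D := rfl
      have e2 : g l = 0 := by simp [hg]
      have e3 : wmap y o = 0 := by simp [hwmap]
      have e4 : wmap y l = 0 := by simp [hwmap]
      have e5 : ∑ i ∈ Finset.univ \ {o, l}, ((wmap y i : ℤ) : ℝ) * g i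
          = ∑ i ∈ Finset.univ \ {o, l}, (y i : ℝ) * g i := by
        apply Finset.sum_congr rfl
        intro i hi
        have hi' : ¬(i = o ∨ i = l) := by
          simpa [Finset.mem_sdiff] using hi
        simp [hwmap, hi']
      rw [e1, e2, e3, e4, e5]
      push_cast
      ring
    rw [h1, h2]
  -- interval bounds
  have bound : ∀ y ∈ S, ⌈t (wmap y)⌉ ≤ y o ∧ y o - ⌈t (wmap y)⌉ ≤ ⌊2 * C * c / (c - 1)⌋ := by
    intro y hy
    obtain ⟨hyM, hyabs, hysum⟩ := hy
    rw [decomp y hysum] at hyabs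
    rw [abs_le] at hyabs
    have htD : t (wmap y) * D = -(C * a (z o)) - b - (d : ℝ) * a (z l) - T (wmap y) := by
      rw [ht]; field_simp
    have hlow : t (wmap y) ≤ (y o : ℝ) := by
      rw [ht, div_le_iff₀ hDpos]
      linarith [hyabs.1]
    have hup : ((y o : ℝ) - t (wmap y)) * D ≤ 2 * (C * a (z o)) := by
      nlinarith [hyabs.2, htD]
    have hup2 : (y o : ℝ) - t (wmap y) ≤ 2 * C * c / (c - 1) := by
      rw [le_div_iff₀ hc1]
      have h0C : (0:ℝ) < C := by linarith
      nlinarith [mul_le_mul_of_nonneg_right hup (le_of_lt hc1),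
        mul_le_mul_of_nonneg_left hDge (by positivity : (0:ℝ) ≤ 2 * C)]
    constructor
    · exact Int.ceil_le.mpr hlow
    · rw [Int.le_floor]
      push_cast
      linarith [Int.le_ceil (t (wmap y))]
  -- injectivity
  have hinj : Set.InjOn φ S := by
    intro y hy y' hy' heq
    have hw : wmap y = wmap y' := congrArg Prod.fst heq
    have h2 : y o - ⌈t (wmap y)⌉ = y' o - ⌈t (wmap y')⌉ := congrArg Prod.snd heq
    rw [hw] at h2
    have ho' : y o = y' o := by omega
    have hrest : ∀ i, ¬(i = o ∨ i = l) → y i = y' i := by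
      intro i hi
      have := congrFun hw i
      simpa [hwmap, hi] using this
    funext i
    by_cases hio : i = o
    · rw [hio]; exact ho'
    by_cases hil : i = l
    · rw [hil]
      have e : ∑ j ∈ Finset.univ \ {o, l}, y j = ∑ j ∈ Finset.univ \ {o, l}, y' j := by
        apply Finset.sum_congr rfl
        intro j hj
        exact hrest j (by simpa [Finset.mem_sdiff] using hj)
      have s1 := sum_split3 o l hol y
      have s2 := sum_split3 o l hol y'
      have hd1 : ∑ i, y i = d := hy.2.2
      have hd2 : ∑ i, y' i = d := hy'.2.2
      rw [s1] at hd1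
      rw [s2] at hd2
      omega
    · exact hrest i (by tauto)
  -- the target finset
  set MI : ℤ := ⌊M⌋ with hMI
  set N : ℤ := ⌊2 * C * c / (c - 1)⌋ with hN
  set F : Finset ((Fin r → ℤ) × ℤ) :=
    (Fintype.piFinset fun i => if i = o ∨ i = l then ({0} : Finset ℤ)
      else Finset.Icc (-MI) MI) ×ˢ Finset.Icc (0 : ℤ) N with hF
  have hsub : φ '' S ⊆ ↑F := by
    rintro _ ⟨y, hy, rfl⟩
    have hb := bound y hy
    have hφy : φ y = (wmap y, y o - ⌈t (wmap y)⌉) := rfl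
    rw [Finset.mem_coe, hφy, hF, Finset.mem_product]
    constructor
    · rw [Fintype.mem_piFinset]
      intro i
      by_cases hio : i = o ∨ i = l
      · simp [hwmap, hio]
      · have hyi := abs_le.mp (hy.1 i)
        have hle : y i ≤ MI := Int.le_floor.mpr hyi.2
        have hge : -MI ≤ y i := by
          have : ((-(y i) : ℤ) : ℝ) ≤ M := by push_cast; linarith [hyi.1]
          have := Int.le_floor.mpr this
          omega
        simp only [hwmap, if_neg hio, Finset.mem_Icc]
        exact ⟨hge, hle⟩
    · rw [Finset.mem_Icc]
      exact ⟨by omega, hb.2⟩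
  have hScard : (S.ncard : ℕ) ≤ F.card := by
    rw [← Set.ncard_image_of_injOn hinj]
    have := Set.ncard_le_ncard hsub F.finite_toSet
    simpa [Set.ncard_coe_finset] using this
  -- card computation
  have hMI1 : 1 ≤ MI := Int.le_floor.mpr (by exact_mod_cast hM)
  have hN0 : 0 ≤ N := by
    rw [hN, Int.le_floor]
    push_cast
    apply div_nonneg (by nlinarith) (by linarith)
  have hcardF : F.card = (2 * MI + 1).toNat ^ (r - 2) * (N + 1).toNat := by
    rw [hF, Finset.card_product, Fintype.card_piFinset]
    congr 1
    · have hfp : Finset.univ.filter (fun i : Fin r => i = o ∨ i = l)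
          = ({o, l} : Finset (Fin r)) := by
        ext i; simp
      have hstep : ∀ i : Fin r,
          (if i = o ∨ i = l then ({0} : Finset ℤ) else Finset.Icc (-MI) MI).card
            = if i = o ∨ i = l then 1 else (2 * MI + 1).toNat := by
        intro i
        rw [apply_ite Finset.card]
        congr 1
        rw [Int.card_Icc]
        congr 1
        ring
      rw [Finset.prod_congr rfl (fun i _ => hstep i), Finset.prod_ite,
        Finset.prod_const_one, Finset.prod_const, one_mul, Finset.filter_not, hfp,
        Finset.card_sdiff_of_subset (Finset.subset_univ _), Finset.card_univ, Fintype.card_fin,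
        Finset.card_pair hol]
    · rw [Int.card_Icc]
      congr 1
      ring
  calc (S.ncard : ℝ) ≤ (F.card : ℝ) := by exact_mod_cast hScard
    _ = ((2 * MI + 1).toNat : ℝ) ^ (r - 2) * ((N + 1).toNat : ℝ) := by
        rw [hcardF]; push_cast; ring
    _ ≤ (3 * M) ^ (r - 2) * ((2 * c / (c - 1) + 2) * C) := by
        have e1 : ((2 * MI + 1).toNat : ℝ) = 2 * (MI : ℝ) + 1 := by
          exact_mod_cast Int.toNat_of_nonneg (show (0:ℤ) ≤ 2 * MI + 1 by omega)
        have e2 : ((N + 1).toNat : ℝ) = (N : ℝ) + 1 := by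
          exact_mod_cast Int.toNat_of_nonneg (show (0:ℤ) ≤ N + 1 by omega)
        have hMle : (MI : ℝ) ≤ M := Int.floor_le M
        have hNle : (N : ℝ) ≤ 2 * C * c / (c - 1) := Int.floor_le _
        have h3 : ((2 * MI + 1).toNat : ℝ) ≤ 3 * M := by rw [e1]; linarith
        have h4 : ((N + 1).toNat : ℝ) ≤ (2 * c / (c - 1) + 2) * C := by
          rw [e2]
          have he : 2 * C * c / (c - 1) = C * (2 * c / (c - 1)) := by ring
          rw [he] at hNle
          nlinarith [hNle, hC]
        apply mul_le_mul _ h4 (by positivity)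
          (pow_nonneg (by linarith : (0:ℝ) ≤ 3 * M) _)
        exact pow_le_pow_left₀ (by positivity) h3 _
    _ = 3 ^ (r - 2) * (2 * c / (c - 1) + 2) * C * M ^ (r - 2) := by
        rw [mul_pow]; ring
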